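/- For a unit vector n ∈ ℝ³, the eigenvalues of the 6×6 matrix G_n = [[0, N_n],[N_nᵀ, 0]] are exactly 0, 1, and -1, each with multiplicity 2. -/
import Mathlib


open Matrix

def Nmat (n : Fin 3 → ℝ) : Matrix (Fin 3) (Fin 3) ℝ :=
  !![0, n 2, -(n 1); -(n 2), 0, n 0; n 1, -(n 0), 0]

def Gmat (n : Fin 3 → ℝ) : Matrix (Fin 3 ⊕ Fin 3) (Fin 3 ⊕ Fin 3) ℝ :=
  Matrix.fromBlocks 0 (Nmat n) (Nmat n)ᵀ 0

/-- `(s,t) ↦ (s•n) ⊕ᵥ (t•n)`, whose range is the 0-eigenspace. -/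
def psiMap (n : Fin 3 → ℝ) : (ℝ × ℝ) →ₗ[ℝ] (Fin 3 ⊕ Fin 3 → ℝ) where
  toFun p := Sum.elim (p.1 • n) (p.2 • n)
  map_add' p q := by funext i; cases i <;> simp [add_smul]
  map_smul' c p := by funext i; cases i <;> simp <;> ring

/-- `b ↦ (μ • N b) ⊕ᵥ b`, mapping `{b ⊥ n}` onto the `μ`-eigenspace for `μ = ±1`. -/
def phiMap (n : Fin 3 → ℝ) (μ : ℝ) : (Fin 3 → ℝ) →ₗ[ℝ] (Fin 3 ⊕ Fin 3 → ℝ) where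
  toFun b := Sum.elim (μ • ((Nmat n) *ᵥ b)) b
  map_add' b c := by funext i; cases i <;> simp [Matrix.mulVec_add, smul_add]
  map_smul' c b := by funext i; cases i <;> simp [Matrix.mulVec_smul] <;> ring

/-- dot product with `n` as a linear functional. -/
def ellMap (n : Fin 3 → ℝ) : (Fin 3 → ℝ) →ₗ[ℝ] ℝ where
  toFun x := n ⬝ᵥ x
  map_add' x y := by simp [dotProduct, Fin.sum_univ_three]; ring
  map_smul' c x := by simp [dotProduct, Fin.sum_univ_three]; ring

theorem stmt_5 (n : Fin 3 → ℝ) (hn : n ⬝ᵥ n = 1) :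
    Module.finrank ℝ (Module.End.eigenspace (Gmat n).mulVecLin (0 : ℝ)) = 2 ∧
    Module.finrank ℝ (Module.End.eigenspace (Gmat n).mulVecLin (1 : ℝ)) = 2 ∧
    Module.finrank ℝ (Module.End.eigenspace (Gmat n).mulVecLin (-1 : ℝ)) = 2 ∧
    ∀ μ : ℝ, μ ≠ 0 → μ ≠ 1 → μ ≠ -1 →
      Module.End.eigenspace (Gmat n).mulVecLin μ = ⊥ := by
  classical
  have hsq : n 0 ^ 2 + n 1 ^ 2 + n 2 ^ 2 = 1 := by
    simpa [dotProduct, Fin.sum_univ_three, sq] using hn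
  have hT : (Nmat n)ᵀ = -(Nmat n) := by
    funext i j; fin_cases i <;> fin_cases j <;> simp [Nmat]
  have hNn : (Nmat n) *ᵥ n = 0 := by
    funext i; fin_cases i <;> simp [Nmat, mulVec, dotProduct, Fin.sum_univ_three] <;> ring
  have hdot : ∀ x, n ⬝ᵥ ((Nmat n) *ᵥ x) = 0 := by
    intro x
    simp [Nmat, mulVec, dotProduct, Fin.sum_univ_three]; ring
  have hNN : ∀ x, (Nmat n) *ᵥ ((Nmat n) *ᵥ x) = (n ⬝ᵥ x) • n - x := by
    intro x
    funext i; fin_cases i <;>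
      simp [Nmat, mulVec, dotProduct, Fin.sum_univ_three]
    · linear_combination (-(x 0)) * hsq
    · linear_combination (-(x 1)) * hsq
    · linear_combination (-(x 2)) * hsq
  have hker : ∀ x, (Nmat n) *ᵥ x = 0 → x = (n ⬝ᵥ x) • n := by
    intro x hx
    have h := hNN x
    rw [hx, Matrix.mulVec_zero] at h
    exact (sub_eq_zero.mp h.symm).symm
  have hG : ∀ w : Fin 3 ⊕ Fin 3 → ℝ, (Gmat n).mulVecLin w =
      Sum.elim ((Nmat n) *ᵥ (w ∘ Sum.inr)) ((Nmat n)ᵀ *ᵥ (w ∘ Sum.inl)) := by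
    intro w
    rw [Matrix.mulVecLin_apply, Gmat, Matrix.fromBlocks_mulVec]
    simp
  -- scalar cancellation helper
  have hsmul : ∀ s t : ℝ, s • n = t • n → s = t := by
    intro s t hst
    have h := congrArg (fun x => n ⬝ᵥ x) hst
    simpa [dotProduct_smul, hn] using h
  -- the 0-eigenspace
  have e0 : Module.End.eigenspace (Gmat n).mulVecLin (0 : ℝ)
      = LinearMap.range (psiMap n) := by
    ext v
    rw [Module.End.mem_eigenspace_iff]
    constructor
    · intro hv
      rw [hG v, zero_smul] at hv
      have h1 : (Nmat n) *ᵥ (v ∘ Sum.inr) = 0 := by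
        funext i; exact congrFun hv (Sum.inl i)
      have h2 : (Nmat n) *ᵥ (v ∘ Sum.inl) = 0 := by
        have : (Nmat n)ᵀ *ᵥ (v ∘ Sum.inl) = 0 := by
          funext i; exact congrFun hv (Sum.inr i)
        rw [hT, Matrix.neg_mulVec, neg_eq_zero] at this
        exact this
      refine ⟨(n ⬝ᵥ (v ∘ Sum.inl), n ⬝ᵥ (v ∘ Sum.inr)), ?_⟩
      funext i
      cases i with
      | inl i => exact (congrFun (hker _ h2) i).symm
      | inr i => exact (congrFun (hker _ h1) i).symm
    · rintro ⟨p, rfl⟩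
      rw [hG, zero_smul]
      funext i
      cases i with
      | inl i =>
        show ((Nmat n) *ᵥ (p.2 • n)) i = 0
        rw [Matrix.mulVec_smul, hNn]; simp
      | inr i =>
        show ((Nmat n)ᵀ *ᵥ (p.1 • n)) i = 0
        rw [hT, Matrix.neg_mulVec, Matrix.mulVec_smul, hNn]; simp
  have hpsi_inj : Function.Injective (psiMap n) := by
    intro p q h
    have h1 : p.1 • n = q.1 • n := funext fun i => congrFun h (Sum.inl i)
    have h2 : p.2 • n = q.2 • n := funext fun i => congrFun h (Sum.inr i)
    exact Prod.ext (hsmul _ _ h1) (hsmul _ _ h2)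
  have dim0 : Module.finrank ℝ (Module.End.eigenspace (Gmat n).mulVecLin (0 : ℝ)) = 2 := by
    rw [e0, LinearMap.finrank_range_of_inj hpsi_inj]
    simp
  -- finrank of ker ell = 2
  have hker_ell : Module.finrank ℝ (LinearMap.ker (ellMap n)) = 2 := by
    have hsurj : Function.Surjective (ellMap n) := by
      intro r
      refine ⟨r • n, ?_⟩
      show n ⬝ᵥ (r • n) = r
      rw [dotProduct_smul, hn, smul_eq_mul, mul_one]
    have h1 : Module.finrank ℝ (LinearMap.range (ellMap n)) = 1 := by
      rw [LinearMap.range_eq_top.mpr hsurj]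
      simp
    have h2 := LinearMap.finrank_range_add_finrank_ker (ellMap n)
    rw [h1] at h2
    have h3 : Module.finrank ℝ (Fin 3 → ℝ) = 3 := by simp
    rw [h3] at h2
    omega
  -- the ±1 eigenspaces
  have e1 : ∀ μ : ℝ, μ * μ = 1 → Module.End.eigenspace (Gmat n).mulVecLin μ
      = Submodule.map (phiMap n μ) (LinearMap.ker (ellMap n)) := by
    intro μ hμ
    have hμ0 : μ ≠ 0 := by intro h; rw [h] at hμ; norm_num at hμ
    ext v
    rw [Module.End.mem_eigenspace_iff]
    constructor
    · intro hv
      rw [hG v] at hv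
      have h1 : (Nmat n) *ᵥ (v ∘ Sum.inr) = μ • (v ∘ Sum.inl) := by
        funext i; exact congrFun hv (Sum.inl i)
      have h2 : (Nmat n)ᵀ *ᵥ (v ∘ Sum.inl) = μ • (v ∘ Sum.inr) := by
        funext i; exact congrFun hv (Sum.inr i)
      have hb0 : n ⬝ᵥ (v ∘ Sum.inr) = 0 := by
        have h3 : μ • (n ⬝ᵥ (v ∘ Sum.inr)) = 0 := by
          calc μ • (n ⬝ᵥ (v ∘ Sum.inr)) = n ⬝ᵥ (μ • (v ∘ Sum.inr)) := (dotProduct_smul _ _ _).symm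
          _ = n ⬝ᵥ ((Nmat n)ᵀ *ᵥ (v ∘ Sum.inl)) := by rw [h2]
          _ = 0 := by rw [hT, Matrix.neg_mulVec, dotProduct_neg, hdot, neg_zero]
        exact (smul_eq_zero.mp h3).resolve_left hμ0
      refine ⟨v ∘ Sum.inr, hb0, ?_⟩
      funext i
      cases i with
      | inl i =>
        show (μ • ((Nmat n) *ᵥ (v ∘ Sum.inr))) i = v (Sum.inl i)
        rw [h1, smul_smul, hμ, one_smul]
        rfl
      | inr i => rfl
    · rintro ⟨b, hb, rfl⟩
      have hb' : n ⬝ᵥ b = 0 := hb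
      have key : (Nmat n)ᵀ *ᵥ (μ • ((Nmat n) *ᵥ b)) = μ • b := by
        rw [hT, Matrix.neg_mulVec, Matrix.mulVec_smul, hNN, hb', zero_smul, zero_sub,
          smul_neg, neg_neg]
      rw [hG]
      funext i
      cases i with
      | inl i =>
        show ((Nmat n) *ᵥ b) i = (μ • Sum.elim (μ • ((Nmat n) *ᵥ b)) b) (Sum.inl i)
        show ((Nmat n) *ᵥ b) i = μ • (μ • ((Nmat n) *ᵥ b)) i
        simp only [Pi.smul_apply, smul_eq_mul]
        rw [← mul_assoc, hμ, one_mul]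
      | inr i =>
        show ((Nmat n)ᵀ *ᵥ (μ • ((Nmat n) *ᵥ b))) i = (μ • Sum.elim (μ • ((Nmat n) *ᵥ b)) b) (Sum.inr i)
        rw [key]
        rfl
  have hphi_inj : ∀ μ : ℝ, Function.Injective (phiMap n μ) := by
    intro μ b c h
    funext i
    exact congrFun h (Sum.inr i)
  have dimpm : ∀ μ : ℝ, μ * μ = 1 →
      Module.finrank ℝ (Module.End.eigenspace (Gmat n).mulVecLin μ) = 2 := by
    intro μ hμ
    rw [e1 μ hμ,
      ← LinearEquiv.finrank_eq (Submodule.equivMapOfInjective (phiMap n μ) (hphi_inj μ)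
        (LinearMap.ker (ellMap n)))]
    exact hker_ell
  refine ⟨dim0, dimpm 1 (by norm_num), dimpm (-1) (by norm_num), ?_⟩
  intro μ h0 h1 hm1
  have hμsq : μ * μ ≠ 1 := by
    intro h
    rcases mul_self_eq_one_iff.mp h with h | h
    · exact h1 h
    · exact hm1 h
  rw [eq_bot_iff]
  intro v hv
  rw [Module.End.mem_eigenspace_iff, hG v] at hv
  have h1' : (Nmat n) *ᵥ (v ∘ Sum.inr) = μ • (v ∘ Sum.inl) := by
    funext i; exact congrFun hv (Sum.inl i)
  have h2' : (Nmat n)ᵀ *ᵥ (v ∘ Sum.inl) = μ • (v ∘ Sum.inr) := by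
    funext i; exact congrFun hv (Sum.inr i)
  have h2'' : (Nmat n) *ᵥ (v ∘ Sum.inl) = -(μ • (v ∘ Sum.inr)) := by
    rw [hT, Matrix.neg_mulVec] at h2'
    rw [← h2', neg_neg]
  have hb0 : n ⬝ᵥ (v ∘ Sum.inr) = 0 := by
    have h3 : μ • (n ⬝ᵥ (v ∘ Sum.inr)) = 0 := by
      calc μ • (n ⬝ᵥ (v ∘ Sum.inr)) = n ⬝ᵥ (μ • (v ∘ Sum.inr)) := (dotProduct_smul _ _ _).symm
      _ = n ⬝ᵥ ((Nmat n)ᵀ *ᵥ (v ∘ Sum.inl)) := by rw [h2']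
      _ = 0 := by rw [hT, Matrix.neg_mulVec, dotProduct_neg, hdot, neg_zero]
    exact (smul_eq_zero.mp h3).resolve_left h0
  have hbig : -(v ∘ Sum.inr) = -((μ * μ) • (v ∘ Sum.inr)) := by
    have hA := hNN (v ∘ Sum.inr)
    rw [hb0, zero_smul, zero_sub] at hA
    -- hA : N (N b) = -b
    have hB : (Nmat n) *ᵥ ((Nmat n) *ᵥ (v ∘ Sum.inr)) = -((μ * μ) • (v ∘ Sum.inr)) := by
      rw [h1', Matrix.mulVec_smul, h2'', smul_neg, smul_smul]
    rw [← hA, hB]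
  have hbz : v ∘ Sum.inr = 0 := by
    have : (μ * μ - 1) • (v ∘ Sum.inr) = 0 := by
      have := neg_injective hbig
      rw [sub_smul, one_smul, ← this, sub_self]
    rcases smul_eq_zero.mp this with h | h
    · exact absurd (by linarith [sub_eq_zero.mp h] : μ * μ = 1) hμsq
    · exact h
  have haz : v ∘ Sum.inl = 0 := by
    have : μ • (v ∘ Sum.inl) = 0 := by
      rw [← h1', hbz, Matrix.mulVec_zero]
    exact (smul_eq_zero.mp this).resolve_left h0
  rw [Submodule.mem_bot]
  funext i
  cases i with
  | inl i => exact congrFun haz i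
  | inr i => exact congrFun hbz i
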